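/- arXiv:1809.04018 — 2 statements merged into one kernel-verified Lean document; each statement's English description precedes it below -/
import Mathlib

section
/- Under the stationary AR(1) covariance structure Cov(Y_i, Y_j) = σ²ρ^{|i−j|}/(1−ρ²) for centered Y_1,...,Y_n, one has ∑_{j=1}^n (Cov(Ȳ_n, Y_j))² = (σ⁴/(1−ρ²)²) [ ((1+ρ)² + 2ρ^{n+1})/((1−ρ)² n) − (4(1+ρ)²ρ(1−ρ^n) − 2ρ²(1−ρ^{2n}))/((1−ρ)²(1−ρ²) n²) ]. -/
open MeasureTheory

lemma my_inner_sum (ρ : ℝ) (hρ : ρ ≠ 1) {n j : ℕ} (hj : j < n) :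
    ∑ i ∈ Finset.range n, ρ ^ (((i:ℤ) - (j:ℤ)).natAbs)
      = (1 + ρ - ρ^(j+1) - ρ^(n-j)) / (1 - ρ) := by
  rw [Finset.range_eq_Ico, ← Finset.sum_Ico_consecutive _ (Nat.zero_le (j+1)) hj]
  have e1 : ∑ i ∈ Finset.Ico 0 (j+1), ρ ^ (((i:ℤ) - (j:ℤ)).natAbs)
      = ∑ k ∈ Finset.range (j+1), ρ ^ k := by
    rw [← Finset.range_eq_Ico, ← Finset.sum_range_reflect]
    apply Finset.sum_congr rfl
    intro i hi
    simp only [Finset.mem_range] at hi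
    congr 1
    omega
  have e2 : ∑ i ∈ Finset.Ico (j+1) n, ρ ^ (((i:ℤ) - (j:ℤ)).natAbs)
      = ρ * ∑ k ∈ Finset.range (n - (j+1)), ρ ^ k := by
    rw [Finset.sum_Ico_eq_sum_range, Finset.mul_sum]
    apply Finset.sum_congr rfl
    intro k hk
    rw [← pow_succ']
    congr 1
    omega
  rw [e1, e2, geom_sum_eq hρ, geom_sum_eq hρ]
  have hnj : n - j = (n - (j+1)) + 1 := by omega
  rw [hnj]
  have h1 : ρ - 1 ≠ 0 := sub_ne_zero.mpr hρ
  have h2 : (1:ℝ) - ρ ≠ 0 := fun h => hρ (by linarith [sub_eq_zero.mp h])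
  field_simp
  ring

lemma my_sumsq (ρ : ℝ) (n : ℕ) (hn : 0 < n) :
    ∑ j ∈ Finset.range n, (1 + ρ - ρ^(j+1) - ρ^(n-j))^2
      = n*(1+ρ)^2 + 2*n*ρ^(n-1)*ρ^2
        + 2*ρ^2*(∑ k ∈ Finset.range n, (ρ^2)^k)
        - 4*(1+ρ)*ρ*(∑ k ∈ Finset.range n, ρ^k) := by
  have key : ∀ j ∈ Finset.range n, (1 + ρ - ρ^(j+1) - ρ^(n-j))^2
      = (1+ρ)^2 + 2*ρ^(n-1)*ρ^2
        + ρ^2*(ρ^2)^j + ρ^2*(ρ^2)^(n-1-j)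
        - 2*(1+ρ)*ρ*ρ^j - 2*(1+ρ)*ρ*ρ^(n-1-j) := by
    intro j hj
    simp only [Finset.mem_range] at hj
    have h1 : n - j = (n-1-j) + 1 := by omega
    have h2 : ρ^(n-1) = ρ^j * ρ^(n-1-j) := by rw [← pow_add]; congr 1; omega
    rw [h1, h2]
    ring
  rw [Finset.sum_congr rfl key]
  have r1 : ∑ j ∈ Finset.range n, (ρ^2)^(n-1-j) = ∑ j ∈ Finset.range n, (ρ^2)^j := by
    rw [← Finset.sum_range_reflect]
    apply Finset.sum_congr rfl; intro j hj; simp only [Finset.mem_range] at hj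
    congr 1; omega
  have r2 : ∑ j ∈ Finset.range n, ρ^(n-1-j) = ∑ j ∈ Finset.range n, ρ^j := by
    rw [← Finset.sum_range_reflect]
    apply Finset.sum_congr rfl; intro j hj; simp only [Finset.mem_range] at hj
    congr 1; omega
  simp only [Finset.sum_sub_distrib, Finset.sum_add_distrib, ← Finset.mul_sum,
    Finset.sum_const, Finset.card_range, nsmul_eq_mul, r1, r2]
  ring

lemma my_alg (ρ σ : ℝ) (h1 : ρ ≠ 1) (hm1 : ρ ≠ -1) (n : ℕ) (hn : 0 < n) :
    ∑ j ∈ Finset.range n,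
        (σ^2/(1-ρ^2)/n * ((1 + ρ - ρ^(j+1) - ρ^(n-j))/(1-ρ)))^2
      = σ ^ 4 / (1 - ρ ^ 2) ^ 2
        * (((1 + ρ) ^ 2 + 2 * ρ ^ (n + 1)) / ((1 - ρ) ^ 2 * n)
          - (4 * (1 + ρ) ^ 2 * ρ * (1 - ρ ^ n) - 2 * ρ ^ 2 * (1 - ρ ^ (2 * n)))
              / ((1 - ρ) ^ 2 * (1 - ρ ^ 2) * n ^ 2)) := by
  have hρ1 : (1:ℝ) - ρ ≠ 0 := sub_ne_zero.mpr (Ne.symm h1)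
  have hρ2 : (1:ℝ) + ρ ≠ 0 := fun h => hm1 (by linarith)
  have hρsq : (1:ℝ) - ρ^2 ≠ 0 := by
    have : (1:ℝ) - ρ^2 = (1-ρ)*(1+ρ) := by ring
    rw [this]; exact mul_ne_zero hρ1 hρ2
  have hρsq1 : ρ^2 ≠ 1 := fun h => hρsq (by rw [h]; ring)
  have hn0 : (n:ℝ) ≠ 0 := Nat.cast_ne_zero.mpr hn.ne'
  have hexp : ρ^(n-1) * ρ^2 = ρ^(n+1) := by rw [← pow_add]; congr 1; omega
  have hexp2 : (ρ^2)^n = ρ^(2*n) := by rw [← pow_mul]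
  simp only [mul_pow, ← Finset.mul_sum, div_pow, ← Finset.sum_div]
  rw [my_sumsq ρ n hn, geom_sum_eq hρsq1, geom_sum_eq h1, hexp2,
    show (2:ℝ)*n*ρ^(n-1)*ρ^2 = 2*n*ρ^(n+1) by rw [mul_assoc, hexp]]
  have hρ1' : ρ - 1 ≠ 0 := sub_ne_zero.mpr h1
  have hρsq1' : ρ^2 - 1 ≠ 0 := sub_ne_zero.mpr hρsq1
  field_simp
  ring

theorem sum_sq_cov_sample_mean_ar1
    {Ω : Type*} [MeasurableSpace Ω] (P : Measure Ω) [IsProbabilityMeasure P]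
    (n : ℕ) (hn : 0 < n) (Y : Fin n → Ω → ℝ) (ρ σ : ℝ) (hσ : 0 < σ) (hρ : |ρ| < 1)
    (hint : ∀ i j : Fin n, Integrable (fun ω => Y i ω * Y j ω) P)
    (hmean : ∀ i : Fin n, ∫ ω, Y i ω ∂P = 0)
    (hcov : ∀ i j : Fin n,
      ∫ ω, Y i ω * Y j ω ∂P
        = σ ^ 2 * ρ ^ (((i : ℤ) - (j : ℤ)).natAbs) / (1 - ρ ^ 2)) :
    ∑ j : Fin n, (∫ ω, ((∑ i, Y i ω) / n) * Y j ω ∂P) ^ 2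
      = σ ^ 4 / (1 - ρ ^ 2) ^ 2
        * (((1 + ρ) ^ 2 + 2 * ρ ^ (n + 1)) / ((1 - ρ) ^ 2 * n)
          - (4 * (1 + ρ) ^ 2 * ρ * (1 - ρ ^ n) - 2 * ρ ^ 2 * (1 - ρ ^ (2 * n)))
              / ((1 - ρ) ^ 2 * (1 - ρ ^ 2) * n ^ 2)) := by
  obtain ⟨hm1, h1⟩ := abs_lt.mp hρ
  have h1' : ρ ≠ 1 := ne_of_lt h1
  have hm1' : ρ ≠ -1 := Ne.symm (ne_of_lt hm1)
  have key : ∀ j : Fin n, ∫ ω, ((∑ i, Y i ω) / n) * Y j ω ∂P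
      = σ^2/(1-ρ^2)/n
          * ∑ i ∈ Finset.range n, ρ ^ (((i:ℤ) - ((j:ℕ):ℤ)).natAbs) := by
    intro j
    have e : (fun ω => ((∑ i, Y i ω) / n) * Y j ω)
        = fun ω => ∑ i : Fin n, (Y i ω * Y j ω) / n := by
      funext ω
      rw [div_mul_eq_mul_div, Finset.sum_mul, Finset.sum_div]
    rw [e, integral_finset_sum _ (fun i _ => (hint i j).div_const _)]
    have : ∀ i : Fin n, ∫ ω, Y i ω * Y j ω / n ∂P
        = σ^2/(1-ρ^2)/n * ρ ^ (((i:ℤ) - (j:ℤ)).natAbs) := by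
      intro i
      rw [integral_div, hcov i j]
      ring
    rw [Finset.sum_congr rfl (fun i _ => this i), ← Finset.mul_sum,
      ← Fin.sum_univ_eq_sum_range (fun i => ρ ^ ((((i:ℕ):ℤ) - ((j:ℕ):ℤ)).natAbs)) n]
  calc ∑ j : Fin n, (∫ ω, ((∑ i, Y i ω) / n) * Y j ω ∂P) ^ 2
      = ∑ j ∈ Finset.range n,
          (σ^2/(1-ρ^2)/n * ((1 + ρ - ρ^(j+1) - ρ^(n-j))/(1-ρ)))^2 := by
        rw [← Fin.sum_univ_eq_sum_range
          (fun j => (σ^2/(1-ρ^2)/n * ((1 + ρ - ρ^(j+1) - ρ^(n-j))/(1-ρ)))^2) n]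
        apply Finset.sum_congr rfl
        intro j _
        rw [key j, my_inner_sum ρ h1' j.isLt]
    _ = _ := my_alg ρ σ h1' hm1' n hn
end

section
/- Under the stationary AR(1) covariance structure with |ρ| < 1, the expectation of the Bessel-corrected sample variance s_n² = (1/(n−1))∑_{i=1}^n (X_i − X̄_n)² satisfies E[s_n²] = (σ²/(1−ρ²)) (1 − 2ρ/((1−ρ)(n−1)) + 2ρ(1−ρ^n)/(n(n−1)(1−ρ)²)). -/
open MeasureTheory Finset

lemma ar1_sum_aux (ρ : ℝ) (n : ℕ) :
    (∑ i ∈ range n, ∑ j ∈ range n, ρ ^ (((i : ℤ) - (j : ℤ)).natAbs)) * (1 - ρ) ^ 2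
      = n * (1 - ρ ^ 2) - 2 * ρ + 2 * ρ ^ (n + 1) := by
  induction n with
  | zero => simp
  | succ n ih =>
    have hrow : ∀ k ∈ range n, ρ ^ (((n : ℤ) - (k : ℤ)).natAbs) = ρ ^ (n - k) := by
      intro k hk; congr 1; have := mem_range.mp hk; omega
    have hcol : ∀ k ∈ range n, ρ ^ (((k : ℤ) - (n : ℤ)).natAbs) = ρ ^ (n - k) := by
      intro k hk; congr 1; have := mem_range.mp hk; omega
    have hgeom : (∑ k ∈ range n, ρ ^ (n - k)) = ρ * ∑ k ∈ range n, ρ ^ k := by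
      rw [← Finset.sum_range_reflect, Finset.mul_sum]
      apply Finset.sum_congr rfl
      intro k hk
      have hk' := mem_range.mp hk
      have h2 : n - (n - 1 - k) = k + 1 := by omega
      rw [h2, pow_succ]; ring
    have hg : (∑ k ∈ range n, ρ ^ k) * (ρ - 1) = ρ ^ n - 1 := geom_sum_mul ρ n
    have expand : ∑ i ∈ range (n+1), ∑ j ∈ range (n+1), ρ ^ (((i : ℤ) - (j : ℤ)).natAbs)
        = (∑ i ∈ range n, ∑ j ∈ range n, ρ ^ (((i : ℤ) - (j : ℤ)).natAbs))
          + (∑ i ∈ range n, ρ ^ (((i : ℤ) - (n : ℤ)).natAbs))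
          + (∑ j ∈ range n, ρ ^ (((n : ℤ) - (j : ℤ)).natAbs)) + 1 := by
      rw [Finset.sum_range_succ]
      simp only [Finset.sum_range_succ, Finset.sum_add_distrib]
      simp
      ring
    rw [expand, Finset.sum_congr rfl hrow, Finset.sum_congr rfl hcol, hgeom]
    push_cast
    linear_combination ih + (-2*ρ*(1-ρ)) * hg

theorem expectation_sample_variance_ar1
    {Ω : Type*} [MeasurableSpace Ω] (P : Measure Ω) [IsProbabilityMeasure P]
    (n : ℕ) (hn : 2 ≤ n) (X : Fin n → Ω → ℝ) (m ρ σ : ℝ) (hσ : 0 < σ) (hρ : |ρ| < 1)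
    (hint : ∀ i j : Fin n, Integrable (fun ω => (X i ω - m) * (X j ω - m)) P)
    (hmean : ∀ i : Fin n, ∫ ω, X i ω ∂P = m)
    (hcov : ∀ i j : Fin n,
      ∫ ω, (X i ω - m) * (X j ω - m) ∂P
        = σ ^ 2 * ρ ^ (((i : ℤ) - (j : ℤ)).natAbs) / (1 - ρ ^ 2)) :
    ∫ ω, (1 / ((n : ℝ) - 1)) * ∑ i, (X i ω - (∑ k, X k ω) / n) ^ 2 ∂P
      = σ ^ 2 / (1 - ρ ^ 2)
        * (1 - 2 * ρ / ((1 - ρ) * ((n : ℝ) - 1))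
            + 2 * ρ * (1 - ρ ^ n) / (n * ((n : ℝ) - 1) * (1 - ρ) ^ 2)) := by
  have hρ' : -1 < ρ ∧ ρ < 1 := abs_lt.mp hρ
  have h1ρ : (1 : ℝ) - ρ ≠ 0 := by nlinarith [hρ'.1, hρ'.2]
  have h1ρ2 : (1 : ℝ) - ρ ^ 2 ≠ 0 := by nlinarith [hρ'.1, hρ'.2]
  have hn1 : (1 : ℝ) ≤ (n : ℝ) := by exact_mod_cast Nat.one_le_of_lt hn
  have hn2 : (2 : ℝ) ≤ (n : ℝ) := by exact_mod_cast hn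
  have hn0 : (n : ℝ) ≠ 0 := by linarith
  have hnm1 : (n : ℝ) - 1 ≠ 0 := by linarith
  set c0 : ℝ := σ ^ 2 / (1 - ρ ^ 2) with hc0
  set S : ℝ := ∑ i : Fin n, ∑ j : Fin n, ρ ^ (((i : ℤ) - (j : ℤ)).natAbs) with hSdef
  -- pointwise rewriting of the integrand
  have hpt : ∀ ω : Ω,
      (1 / ((n : ℝ) - 1)) * ∑ i, (X i ω - (∑ k, X k ω) / n) ^ 2
        = (1 / ((n : ℝ) - 1)) *
            ((∑ i, (X i ω - m) * (X i ω - m))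
              - (1 / (n : ℝ)) * ∑ i, ∑ j, (X i ω - m) * (X j ω - m)) := by
    intro ω
    set Y : Fin n → ℝ := fun i => X i ω - m with hY
    set T : ℝ := ∑ k, Y k with hT
    have hmeanX : (∑ k, X k ω) / n = T / n + m := by
      have : ∑ k, X k ω = T + n * m := by
        rw [hT]
        simp only [hY, Finset.sum_sub_distrib, Finset.sum_const, Finset.card_univ,
          Fintype.card_fin, nsmul_eq_mul]
        ring
      rw [this]
      field_simp
    have hTsq : T * T = ∑ i, ∑ j, Y i * Y j := by
      rw [hT, Finset.sum_mul_sum]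
    have hterm : ∀ i : Fin n, (X i ω - (∑ k, X k ω) / n) ^ 2
        = Y i * Y i - 2 * (T / n) * Y i + (T / n) ^ 2 := by
      intro i
      rw [hmeanX]
      simp only [hY]
      ring
    rw [Finset.sum_congr rfl fun i _ => hterm i]
    rw [Finset.sum_add_distrib, Finset.sum_sub_distrib, ← Finset.mul_sum,
      Finset.sum_const, Finset.card_univ, Fintype.card_fin, nsmul_eq_mul, ← hT, ← hTsq]
    field_simp
    ring
  have hrw : (fun ω => (1 / ((n : ℝ) - 1)) * ∑ i, (X i ω - (∑ k, X k ω) / n) ^ 2)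
      = fun ω => (1 / ((n : ℝ) - 1)) *
            ((∑ i, (X i ω - m) * (X i ω - m))
              - (1 / (n : ℝ)) * ∑ i, ∑ j, (X i ω - m) * (X j ω - m)) := funext hpt
  rw [hrw]
  -- integrability
  have hintA : Integrable (fun ω => ∑ i, (X i ω - m) * (X i ω - m)) P :=
    integrable_finset_sum _ fun i _ => hint i i
  have hintB : Integrable (fun ω => ∑ i : Fin n, ∑ j : Fin n, (X i ω - m) * (X j ω - m)) P :=
    integrable_finset_sum _ fun i _ => integrable_finset_sum _ fun j _ => hint i j
  rw [integral_const_mul, integral_sub hintA (hintB.const_mul _), integral_const_mul]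
  have hA : ∫ ω, ∑ i, (X i ω - m) * (X i ω - m) ∂P = n * c0 := by
    rw [integral_finset_sum _ fun i _ => hint i i]
    have : ∀ i : Fin n, ∫ ω, (X i ω - m) * (X i ω - m) ∂P = c0 := by
      intro i
      rw [hcov i i]
      simp [hc0]
    rw [Finset.sum_congr rfl fun i _ => this i]
    simp [Finset.card_univ, mul_comm]
  have hB : ∫ ω, ∑ i : Fin n, ∑ j : Fin n, (X i ω - m) * (X j ω - m) ∂P = c0 * S := by
    rw [integral_finset_sum _ fun i _ => integrable_finset_sum _ fun j _ => hint i j]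
    have : ∀ i : Fin n, ∫ ω, ∑ j, (X i ω - m) * (X j ω - m) ∂P
        = ∑ j : Fin n, c0 * ρ ^ (((i : ℤ) - (j : ℤ)).natAbs) := by
      intro i
      rw [integral_finset_sum _ fun j _ => hint i j]
      refine Finset.sum_congr rfl fun j _ => ?_
      rw [hcov i j, hc0]
      ring
    rw [Finset.sum_congr rfl fun i _ => this i]
    rw [hSdef, Finset.mul_sum]
    exact Finset.sum_congr rfl fun i _ => (Finset.mul_sum _ _ _).symm
  rw [hA, hB]
  -- the sum formula
  have hS : S * (1 - ρ) ^ 2 = n * (1 - ρ ^ 2) - 2 * ρ + 2 * ρ ^ (n + 1) := by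
    have : S = ∑ i ∈ range n, ∑ j ∈ range n, ρ ^ (((i : ℤ) - (j : ℤ)).natAbs) := by
      rw [hSdef]
      rw [Fin.sum_univ_eq_sum_range (fun i : ℕ =>
        ∑ j : Fin n, ρ ^ (((i : ℤ) - (j : ℤ)).natAbs))]
      exact Finset.sum_congr rfl fun i _ =>
        Fin.sum_univ_eq_sum_range (fun j : ℕ => ρ ^ (((i : ℤ) - (j : ℤ)).natAbs)) n
    rw [this]
    exact ar1_sum_aux ρ n
  have hSval : S = (n * (1 - ρ ^ 2) - 2 * ρ + 2 * ρ ^ (n + 1)) / (1 - ρ) ^ 2 := by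
    field_simp at hS ⊢
    linarith [hS]
  rw [hSval, hc0]
  field_simp
  ring
end
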